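/- arXiv:math/0008090 — 3 statements merged into one kernel-verified Lean document; each statement's English description precedes it below -/
import Mathlib

section
/- For every A ⊆ I_n and every pair of distinct elements i, j ∈ I_n \ A, the relation Σ_{C ⊆ A, D ⊆ A} (u(C∪{j}) + u(C∪{i,j}))·u(D∪{i}) = Σ_{C ⊆ A, D ⊆ A} (u(D∪{i}) + u(D∪{i,j}))·u(C∪{j}) holds in Q_n. -/
/-!
Summing `u(C ∪ {i})` over `C ⊆ B` inverts the alternating sum that defines `u`, leaving
`-z_{B,i}`. Applied to `B ∪ {j}` and combined with the additive relation this gives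
`Σ_{C ⊆ A} (u(C ∪ {j}) + u(C ∪ {i,j})) = -z_{A∪{i},j}`. Hence each side of the relation is a
product of two such sums, namely `z_{A∪{i},j} z_{A,i}` and `z_{A∪{j},i} z_{A,j}`, which agree by the
multiplicative relation. The additive relation, applied termwise, is also what makes `u(B)`
independent of the chosen index.
-/

/-- Index type for the generators `z_{A,i}` of `Qₙ`: pairs `(A, i)` with
`A ⊆ Iₙ` and `i ∉ A`. -/
abbrev QIdx (n : ℕ) := {p : Finset (Fin n) × Fin n // p.2 ∉ p.1}

/-- The defining relations of the algebra `Qₙ`: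
additive relations `z_{A∪{i},j} + z_{A,i} = z_{A∪{j},i} + z_{A,j}` and
multiplicative relations `z_{A∪{i},j} · z_{A,i} = z_{A∪{j},i} · z_{A,j}`. -/
inductive QnRel (K : Type*) [Field K] (n : ℕ) :
    FreeAlgebra K (QIdx n) → FreeAlgebra K (QIdx n) → Prop
  | add (A : Finset (Fin n)) (i j : Fin n) (hi : i ∉ A) (hj : j ∉ A) (hij : i ≠ j) :
      QnRel K n
        (FreeAlgebra.ι K (⟨(insert i A, j), by simp [Finset.mem_insert, hij.symm, hj]⟩ : QIdx n)
          + FreeAlgebra.ι K (⟨(A, i), hi⟩ : QIdx n))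
        (FreeAlgebra.ι K (⟨(insert j A, i), by simp [Finset.mem_insert, hij, hi]⟩ : QIdx n)
          + FreeAlgebra.ι K (⟨(A, j), hj⟩ : QIdx n))
  | mul (A : Finset (Fin n)) (i j : Fin n) (hi : i ∉ A) (hj : j ∉ A) (hij : i ≠ j) :
      QnRel K n
        (FreeAlgebra.ι K (⟨(insert i A, j), by simp [Finset.mem_insert, hij.symm, hj]⟩ : QIdx n)
          * FreeAlgebra.ι K (⟨(A, i), hi⟩ : QIdx n))
        (FreeAlgebra.ι K (⟨(insert j A, i), by simp [Finset.mem_insert, hij, hi]⟩ : QIdx n)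
          * FreeAlgebra.ι K (⟨(A, j), hj⟩ : QIdx n))

/-- The algebra `Qₙ`: the quotient of the free associative unital `K`-algebra on the
generators `z_{A,i}` by the two-sided ideal generated by the defining relations. -/
abbrev Qn (K : Type*) [Field K] (n : ℕ) := RingQuot (QnRel K n)

/-- The image `z_{A,i}` of a generator in `Qₙ` (junk value `0` if `i ∈ A`). -/
noncomputable def zQ (K : Type*) [Field K] (n : ℕ) (A : Finset (Fin n)) (i : Fin n) : Qn K n :=
  if h : i ∉ A then RingQuot.mkAlgHom K (QnRel K n) (FreeAlgebra.ι K (⟨(A, i), h⟩ : QIdx n))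
  else 0

/-- The element `u(A) = Σ_{D ⊆ A \ {i}} (−1)^{|A|−|D|} z_{D,i}` for the choice `i = min A`
(for nonempty `A`), with `u(∅) = 1`. -/
noncomputable def uQ (K : Type*) [Field K] (n : ℕ) (A : Finset (Fin n)) : Qn K n :=
  if h : A.Nonempty then
    ∑ D ∈ (A.erase (A.min' h)).powerset,
      (-1 : Qn K n) ^ (A.card - D.card) * zQ K n D (A.min' h)
  else 1

/-- The relations defining `Q(F)`: each `u(A)` with nonempty `A ∉ F` is set to `0`. -/
inductive QcRel (K : Type*) [Field K] (n : ℕ) (F : Set (Finset (Fin n))) :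
    Qn K n → Qn K n → Prop
  | rel (A : Finset (Fin n)) (hA : A.Nonempty) (hAF : A ∉ F) : QcRel K n F (uQ K n A) 0

/-- The algebra `Q(F)`: the quotient of `Qₙ` by the two-sided ideal generated by all
`u(A)` with nonempty `A ∉ F`. -/
abbrev Qc (K : Type*) [Field K] (n : ℕ) (F : Set (Finset (Fin n))) := RingQuot (QcRel K n F)

/-- The image of `u(A)` in `Q(F)`. -/
noncomputable def uc (K : Type*) [Field K] (n : ℕ) (F : Set (Finset (Fin n)))
    (A : Finset (Fin n)) : Qc K n F :=
  RingQuot.mkAlgHom K (QcRel K n F) (uQ K n A)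

section

open Finset

theorem neg_one_pow_sub_eq_pow_add {R : Type*} [Monoid R] [HasDistribNeg R] {m k : ℕ}
    (h : k ≤ m) : (-1 : R) ^ (m - k) = (-1) ^ (m + k) := by
  simp [show m + k = m - k + 2 * k by omega, pow_add, pow_mul]

theorem sum_powerset_sum_powerset_neg_one_pow_zsmul {α M : Type*} [DecidableEq α]
    [AddCommGroup M] (B : Finset α) (g : Finset α → M) :
    ∑ C ∈ B.powerset, ∑ D ∈ C.powerset, (-1 : ℤ) ^ (#C + #D) • g D = g B := by
  induction B using Finset.induction_on generalizing g with
  | empty => simp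
  | @insert a s ha ih =>
    have split : ∀ C ∈ s.powerset,
        ∑ D ∈ (insert a C).powerset, (-1 : ℤ) ^ (#(insert a C) + #D) • g D =
          -∑ D ∈ C.powerset, (-1 : ℤ) ^ (#C + #D) • g D +
            ∑ D ∈ C.powerset, (-1 : ℤ) ^ (#C + #D) • g (insert a D) := by
      intro C hC
      have haC : a ∉ C := fun h => ha (mem_powerset.mp hC h)
      rw [sum_powerset_insert haC, card_insert_of_notMem haC, ← sum_neg_distrib]
      congr 1 <;> refine sum_congr rfl fun D hD => ?_
      · rw [add_right_comm, pow_succ, mul_neg_one, neg_smul]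
      · have haD : a ∉ D := fun h => haC (mem_powerset.mp hD h)
        rw [card_insert_of_notMem haD, show #C + 1 + (#D + 1) = #C + #D + 2 by omega,
          pow_add, neg_one_sq, mul_one]
    rw [sum_powerset_insert ha, sum_congr rfl split, sum_add_distrib, sum_neg_distrib,
      add_neg_cancel_left, ih]

variable {K : Type*} [Field K] {n : ℕ}

/-- `u(B)` computed with the index `i ∈ B` in place of `min B`. The sign is an integer acting by
`zsmul`: ring lemmas about `(-1 : Qn K n)` do not rewrite, since the `RingQuot` instances on `Qn`
agree with those derived from its `Ring` structure only up to unfolding. -/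
noncomputable def uAt (K : Type*) [Field K] (n : ℕ) (B : Finset (Fin n)) (i : Fin n) :
    Qn K n :=
  ∑ D ∈ (B.erase i).powerset, (-1 : ℤ) ^ (#B + #D) • zQ K n D i

theorem zQ_insert_add_zQ (A : Finset (Fin n)) (i j : Fin n) (hi : i ∉ A) (hj : j ∉ A)
    (hij : i ≠ j) :
    zQ K n (insert i A) j + zQ K n A i = zQ K n (insert j A) i + zQ K n A j := by
  have hjA : j ∉ insert i A := by simp [hij.symm, hj]
  have hiA : i ∉ insert j A := by simp [hij, hi]
  simp only [zQ, dif_pos hjA, dif_pos hi, dif_pos hiA, dif_pos hj, ← map_add]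
  exact RingQuot.mkAlgHom_rel K (QnRel.add A i j hi hj hij)

theorem zQ_insert_mul_zQ (A : Finset (Fin n)) (i j : Fin n) (hi : i ∉ A) (hj : j ∉ A)
    (hij : i ≠ j) :
    zQ K n (insert i A) j * zQ K n A i = zQ K n (insert j A) i * zQ K n A j := by
  have hjA : j ∉ insert i A := by simp [hij.symm, hj]
  have hiA : i ∉ insert j A := by simp [hij, hi]
  simp only [zQ, dif_pos hjA, dif_pos hi, dif_pos hiA, dif_pos hj, ← map_mul]
  exact RingQuot.mkAlgHom_rel K (QnRel.mul A i j hi hj hij)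

theorem uAt_eq_uAt {B : Finset (Fin n)} {i j : Fin n} (hi : i ∈ B) (hj : j ∈ B) :
    uAt K n B i = uAt K n B j := by
  rcases eq_or_ne i j with rfl | hij
  · rfl
  set S := (B.erase i).erase j with hS
  have hjS : j ∉ S := notMem_erase _ _
  have hiS : i ∉ S := by simp [hS]
  have hBi : B.erase i = insert j S := (insert_erase (mem_erase.mpr ⟨hij.symm, hj⟩)).symm
  have hBj : B.erase j = insert i S := by
    rw [hS, erase_right_comm, insert_erase (mem_erase.mpr ⟨hij, hi⟩)]
  rw [uAt, uAt, hBi, hBj, sum_powerset_insert hjS, sum_powerset_insert hiS,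
    ← sum_add_distrib, ← sum_add_distrib]
  refine sum_congr rfl fun E hE => ?_
  have hiE : i ∉ E := fun h => hiS (mem_powerset.mp hE h)
  have hjE : j ∉ E := fun h => hjS (mem_powerset.mp hE h)
  simp only [card_insert_of_notMem hiE, card_insert_of_notMem hjE, ← add_assoc, pow_succ,
    mul_neg_one, neg_smul, ← sub_eq_add_neg, ← zsmul_sub]
  congr 1
  rw [sub_eq_sub_iff_add_eq_add, add_comm, zQ_insert_add_zQ E i j hiE hjE hij, add_comm]

theorem uQ_eq_uAt {A : Finset (Fin n)} {i : Fin n} (hi : i ∈ A) : uQ K n A = uAt K n A i := by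
  have hA : A.Nonempty := ⟨i, hi⟩
  rw [uQ, dif_pos hA, ← uAt_eq_uAt (A.min'_mem hA) hi, uAt]
  refine sum_congr rfl fun D hD => ?_
  rw [← neg_one_pow_sub_eq_pow_add
      (card_le_card ((mem_powerset.mp hD).trans (erase_subset _ _))),
    zsmul_eq_mul, Int.cast_pow, Int.cast_neg, Int.cast_one]

theorem sum_uQ_insert {B : Finset (Fin n)} {i : Fin n} (hi : i ∉ B) :
    ∑ C ∈ B.powerset, uQ K n (insert i C) = -zQ K n B i := by
  have hterm : ∀ C ∈ B.powerset, uQ K n (insert i C) =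
      -∑ D ∈ C.powerset, (-1 : ℤ) ^ (#C + #D) • zQ K n D i := by
    intro C hC
    have hiC : i ∉ C := fun h => hi (mem_powerset.mp hC h)
    rw [uQ_eq_uAt (mem_insert_self i C), uAt, erase_insert hiC, card_insert_of_notMem hiC,
      ← sum_neg_distrib]
    refine sum_congr rfl fun D _ => ?_
    rw [add_right_comm, pow_succ, mul_neg_one, neg_smul]
  rw [sum_congr rfl hterm, sum_neg_distrib, sum_powerset_sum_powerset_neg_one_pow_zsmul]

theorem sum_uQ_insert_add_uQ_insert_insert {B : Finset (Fin n)} {i j : Fin n} (hi : i ∉ B)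
    (hj : j ∉ B) (hij : i ≠ j) :
    ∑ C ∈ B.powerset, (uQ K n (insert j C) + uQ K n (insert i (insert j C))) =
      -zQ K n (insert i B) j := by
  have hiB : i ∉ insert j B := by simp [hi, hij]
  have hsplit := sum_uQ_insert (K := K) hiB
  rw [sum_powerset_insert hj, sum_uQ_insert hi] at hsplit
  rw [sum_add_distrib, sum_uQ_insert hj, eq_neg_add_of_add_eq hsplit,
    eq_sub_of_add_eq (zQ_insert_add_zQ B i j hi hj hij).symm]
  abel

end

/-- Relation (4_{A,i,j}):
`Σ_{C,D⊆A} (u(C∪{j}) + u(C∪{i,j}))·u(D∪{i}) = Σ_{C,D⊆A} (u(D∪{i}) + u(D∪{i,j}))·u(C∪{j})`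
holds in `Qₙ`. -/
theorem relation_four (K : Type*) [Field K] (n : ℕ)
    (A : Finset (Fin n)) (i j : Fin n) (hi : i ∉ A) (hj : j ∉ A) (hij : i ≠ j) :
    ∑ C ∈ A.powerset, ∑ D ∈ A.powerset,
        (uQ K n (insert j C) + uQ K n (insert i (insert j C))) * uQ K n (insert i D) =
      ∑ C ∈ A.powerset, ∑ D ∈ A.powerset,
        (uQ K n (insert i D) + uQ K n (insert i (insert j D))) * uQ K n (insert j C) := by
  rw [← Finset.sum_mul_sum, Finset.sum_comm, ← Finset.sum_mul_sum,
    sum_uQ_insert_add_uQ_insert_insert hi hj hij, sum_uQ_insert hi, sum_uQ_insert hj]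
  simp only [Finset.insert_comm i j]
  rw [sum_uQ_insert_add_uQ_insert_insert hj hi hij.symm]
  exact (neg_mul_neg (α := Qn K n) _ _).trans
    ((zQ_insert_mul_zQ A i j hi hj hij).trans (neg_mul_neg (α := Qn K n) _ _).symm)
end

section
/- Let F be a graph with n nodes. If i, j ∈ I_n are distinct and {i,j} ∉ E(F), then u(i) and u(j) commute in Q(F): [u(i), u(j)] = 0. -/
lemma zrel_add (K : Type*) [Field K] (n : ℕ) (A : Finset (Fin n)) (i j : Fin n)
    (hi : i ∉ A) (hj : j ∉ A) (hij : i ≠ j) :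
    zQ K n (insert i A) j + zQ K n A i = zQ K n (insert j A) i + zQ K n A j := by
  have h1 : j ∉ insert i A := by simp [Finset.mem_insert, hij.symm, hj]
  have h2 : i ∉ insert j A := by simp [Finset.mem_insert, hij, hi]
  rw [zQ, zQ, zQ, zQ, dif_pos h1, dif_pos hi, dif_pos h2, dif_pos hj]
  have := RingQuot.mkAlgHom_rel K (QnRel.add A i j hi hj hij : QnRel K n _ _)
  simpa [map_add] using this

lemma zrel_mul (K : Type*) [Field K] (n : ℕ) (A : Finset (Fin n)) (i j : Fin n)
    (hi : i ∉ A) (hj : j ∉ A) (hij : i ≠ j) :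
    zQ K n (insert i A) j * zQ K n A i = zQ K n (insert j A) i * zQ K n A j := by
  have h1 : j ∉ insert i A := by simp [Finset.mem_insert, hij.symm, hj]
  have h2 : i ∉ insert j A := by simp [Finset.mem_insert, hij, hi]
  rw [zQ, zQ, zQ, zQ, dif_pos h1, dif_pos hi, dif_pos h2, dif_pos hj]
  have := RingQuot.mkAlgHom_rel K (QnRel.mul A i j hi hj hij : QnRel K n _ _)
  simpa [map_mul] using this

lemma uQ_singleton (K : Type*) [Field K] (n : ℕ) (i : Fin n) :
    uQ K n {i} = -zQ K n ∅ i := by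
  rw [uQ, dif_pos (Finset.singleton_nonempty i)]
  simp only [Finset.min'_singleton, Finset.erase_singleton, Finset.powerset_empty,
    Finset.sum_singleton, Finset.card_singleton, Finset.card_empty, Nat.sub_zero, pow_one]
  exact neg_one_mul (zQ K n ∅ i)

lemma uQ_pair (K : Type*) [Field K] (n : ℕ) (i j : Fin n) (h : i < j) :
    uQ K n {i, j} = zQ K n ∅ i - zQ K n {j} i := by
  have hne : ({i, j} : Finset (Fin n)).Nonempty := ⟨i, by simp⟩
  have hmin : ({i, j} : Finset (Fin n)).min' hne = i := by
    apply le_antisymm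
    · exact Finset.min'_le _ _ (by simp)
    · apply Finset.le_min'
      intro y hy
      rcases Finset.mem_insert.mp hy with rfl | hy
      · exact le_rfl
      · rw [Finset.mem_singleton.mp hy]; exact h.le
  have herase : ({i, j} : Finset (Fin n)).erase i = {j} := by
    rw [Finset.erase_insert (by simp [h.ne])]
  have hcard : ({i, j} : Finset (Fin n)).card = 2 := Finset.card_pair h.ne
  rw [uQ, dif_pos hne]
  have hpow : ({j} : Finset (Fin n)).powerset = {∅, {j}} := by
    ext D
    simp [Finset.subset_singleton_iff]
  simp only [hmin, herase, hcard, hpow]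
  rw [Finset.sum_pair ((Finset.singleton_ne_empty j).symm)]
  have h21 : (2 : ℕ) - 1 = 1 := rfl
  have hsq : ((-1 : RingQuot (QnRel K n))) ^ (2 : ℕ) = 1 := by
    rw [pow_two]; exact (neg_mul_neg (1 : RingQuot (QnRel K n)) 1).trans (one_mul 1)
  rw [Finset.card_empty, Finset.card_singleton, Nat.sub_zero, h21, hsq, one_mul,
    pow_one, neg_one_mul (zQ K n {j} i), ← sub_eq_add_neg]

lemma zrel_add' (K : Type*) [Field K] (n : ℕ) (i j : Fin n) (hij : i ≠ j) :
    zQ K n {i} j + zQ K n ∅ i = zQ K n {j} i + zQ K n ∅ j := by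
  have := zrel_add K n ∅ i j (Finset.notMem_empty i) (Finset.notMem_empty j) hij
  simpa using this

lemma zrel_mul' (K : Type*) [Field K] (n : ℕ) (i j : Fin n) (hij : i ≠ j) :
    zQ K n {i} j * zQ K n ∅ i = zQ K n {j} i * zQ K n ∅ j := by
  have := zrel_mul K n ∅ i j (Finset.notMem_empty i) (Finset.notMem_empty j) hij
  simpa using this

lemma key_comm (K : Type*) [Field K] (n : ℕ) (F : Set (Finset (Fin n)))
    (i j : Fin n) (h : i < j) (hE : ({i, j} : Finset (Fin n)) ∉ F) :
    RingQuot.mkAlgHom K (QcRel K n F) (zQ K n ∅ i) *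
      RingQuot.mkAlgHom K (QcRel K n F) (zQ K n ∅ j) =
    RingQuot.mkAlgHom K (QcRel K n F) (zQ K n ∅ j) *
      RingQuot.mkAlgHom K (QcRel K n F) (zQ K n ∅ i) := by
  set φ := RingQuot.mkAlgHom K (QcRel K n F) with hφ
  have h0 : φ (uQ K n {i, j}) = 0 := by
    have := RingQuot.mkAlgHom_rel K
      (QcRel.rel {i, j} ⟨i, by simp⟩ hE : QcRel K n F _ _)
    simpa using this
  rw [uQ_pair K n i j h, map_sub, sub_eq_zero] at h0
  have hadd := congrArg φ (zrel_add' K n i j h.ne)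
  have hmul := congrArg φ (zrel_mul' K n i j h.ne)
  rw [map_add, map_add, ← h0] at hadd
  have hdb : φ (zQ K n {i} j) = φ (zQ K n ∅ j) :=
    (eq_sub_of_add_eq hadd).trans (add_sub_cancel_left _ _)
  rw [map_mul, map_mul, ← h0, hdb] at hmul
  exact hmul.symm

/-- For a graph `F`, if `i ≠ j` and `{i,j}` is not an edge of `F`, then `u(i)` and `u(j)`
commute in `Q(F)`. -/
theorem graph_commute (K : Type*) [Field K] (n : ℕ)
    (F : Set (Finset (Fin n)))
    (hFne : ∀ A ∈ F, A.Nonempty)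
    (hFsing : ∀ i : Fin n, ({i} : Finset (Fin n)) ∈ F)
    (hFdown : ∀ A ∈ F, ∀ B ⊆ A, B.Nonempty → B ∈ F)
    (hFgr : ∀ A ∈ F, A.card ≤ 2)
    (i j : Fin n) (hij : i ≠ j) (hE : ({i, j} : Finset (Fin n)) ∉ F) :
    uc K n F {i} * uc K n F {j} - uc K n F {j} * uc K n F {i} = 0 := by
  have hmulQ : ∀ k l : Fin n, uQ K n {k} * uQ K n {l} = zQ K n ∅ k * zQ K n ∅ l := by
    intro k l
    rw [uQ_singleton, uQ_singleton]
    exact neg_mul_neg (zQ K n ∅ k) (zQ K n ∅ l)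
  have hkey : RingQuot.mkAlgHom K (QcRel K n F) (zQ K n ∅ i * zQ K n ∅ j) =
      RingQuot.mkAlgHom K (QcRel K n F) (zQ K n ∅ j * zQ K n ∅ i) := by
    rw [map_mul, map_mul]
    rcases lt_or_gt_of_ne hij with h | h
    · exact key_comm K n F i j h hE
    · have hE' : ({j, i} : Finset (Fin n)) ∉ F := by rwa [Finset.pair_comm]
      exact (key_comm K n F j i h hE').symm
  have h1 : uc K n F {i} * uc K n F {j} =
      RingQuot.mkAlgHom K (QcRel K n F) (zQ K n ∅ i * zQ K n ∅ j) := by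
    rw [uc, uc, ← map_mul, hmulQ]
  have h2 : uc K n F {j} * uc K n F {i} =
      RingQuot.mkAlgHom K (QcRel K n F) (zQ K n ∅ j * zQ K n ∅ i) := by
    rw [uc, uc, ← map_mul, hmulQ]
  exact sub_eq_zero_of_eq (h1.trans (hkey.trans h2.symm))
end

section
/- Let F be a graph with n nodes. Then for every quadruple (i,j,k,l) of pairwise distinct elements of I_n, one has [u(ik), u(jl)] = [u(jk), u(il)] in Q(F), where [x,y] = xy − yx. -/
/-!
In `Q(F)` every `u(A)` with `|A| ≥ 3` vanishes. Expanded at `m` (the additive relations make the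
expansion independent of the base point), `u(D ∪ {m})` is up to sign the alternating sum of the
`z_{E,m}` over `E ⊆ D`, so these vanishings say that all differences of order `≥ 2` of
`D ↦ z_{D,m}` are zero, and Möbius inversion gives `z_{D,m} = z_{∅,m} − Σ_{x ∈ D} u(mx)`.
Substituting this into the multiplicative relations `z_{D∪{i},j} z_{D,i} = z_{D∪{j},i} z_{D,j}`
for `D = ∅, {k}, {l}, {k,l}`, the second difference of these four relations is
`[u(ik), u(jl)] − [u(jk), u(il)] = 0`.
-/

theorem neg_one_pow_sub_of_le {R : Type*} [Ring R] {m k : ℕ} (h : k ≤ m) :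
    (-1 : R) ^ (m - k) = (-1) ^ m * (-1) ^ k := by
  obtain ⟨c, rfl⟩ := Nat.exists_eq_add_of_le h
  rw [Nat.add_sub_cancel_left, add_comm, pow_add, mul_assoc, ← pow_add,
    Even.neg_one_pow ⟨k, rfl⟩, mul_one]

namespace Finset

variable {α R : Type*} [Ring R]

theorem sum_powerset_neg_one_pow_card_mul_of_nonempty {D : Finset α} (hD : D.Nonempty) (c : R) :
    ∑ E ∈ D.powerset, (-1 : R) ^ #E * c = 0 := by
  have h := congrArg (Int.cast : ℤ → R) (sum_powerset_neg_one_pow_card_of_nonempty hD)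
  push_cast at h
  rw [← sum_mul, h, zero_mul]

/-- Möbius inversion on the Boolean lattice: a set function whose Möbius transform vanishes on
all nonempty sets is constant. -/
theorem eq_empty_of_sum_powerset_neg_one_pow_mul_eq_zero {S : Finset α} {f : Finset α → R}
    (h : ∀ D ⊆ S, D.Nonempty → ∑ E ∈ D.powerset, (-1 : R) ^ #E * f E = 0) :
    ∀ D ⊆ S, f D = f ∅ := by
  intro D
  induction D using strongInduction with
  | H D ih =>
    intro hDS
    rcases D.eq_empty_or_nonempty with rfl | hD
    · rfl
    have hsum : ∑ E ∈ D.powerset, (-1 : R) ^ #E * f E = (-1) ^ #D * (f D - f ∅) := by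
      calc ∑ E ∈ D.powerset, (-1 : R) ^ #E * f E
          = ∑ E ∈ D.powerset, (-1 : R) ^ #E * (f E - f ∅) := by
            simp only [mul_sub, sum_sub_distrib, sum_powerset_neg_one_pow_card_mul_of_nonempty hD,
              sub_zero]
        _ = (-1) ^ #D * (f D - f ∅) := by
            refine sum_eq_single_of_mem D (mem_powerset_self D) fun E hE hne => ?_
            rw [ih E (ssubset_of_subset_of_ne (mem_powerset.mp hE) hne)
              ((mem_powerset.mp hE).trans hDS), sub_self, mul_zero]
    rw [h D hDS hD, eq_comm, neg_one_pow_mul_eq_zero_iff, sub_eq_zero] at hsum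
    exact hsum

variable [DecidableEq α]

theorem sum_powerset_insert_neg_one_pow_mul {D : Finset α} {x : α} (hx : x ∉ D)
    (g : Finset α → R) :
    ∑ E ∈ (insert x D).powerset, (-1 : R) ^ #E * g E
      = ∑ E ∈ D.powerset, (-1 : R) ^ #E * (g E - g (insert x E)) := by
  rw [sum_powerset_insert hx, ← sum_add_distrib]
  refine sum_congr rfl fun E hE => ?_
  rw [card_insert_of_notMem fun h => hx (mem_powerset.mp hE h), pow_succ]
  noncomm_ring

end Finset

open Finset

section Qn

variable {K : Type*} [Field K] {n : ℕ}

theorem zQ_of_notMem {A : Finset (Fin n)} {a : Fin n} (h : a ∉ A) :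
    zQ K n A a = RingQuot.mkAlgHom K (QnRel K n) (FreeAlgebra.ι K (⟨(A, a), h⟩ : QIdx n)) :=
  dif_pos h

theorem zQ_add_rel {A : Finset (Fin n)} {a b : Fin n} (ha : a ∉ A) (hb : b ∉ A) (hab : a ≠ b) :
    zQ K n (insert a A) b + zQ K n A a = zQ K n (insert b A) a + zQ K n A b := by
  rw [zQ_of_notMem ha, zQ_of_notMem hb, zQ_of_notMem (by simp [hab.symm, hb]),
    zQ_of_notMem (by simp [hab, ha]), ← map_add, ← map_add]
  exact RingQuot.mkAlgHom_rel K (QnRel.add A a b ha hb hab)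

theorem zQ_mul_rel {A : Finset (Fin n)} {a b : Fin n} (ha : a ∉ A) (hb : b ∉ A) (hab : a ≠ b) :
    zQ K n (insert a A) b * zQ K n A a = zQ K n (insert b A) a * zQ K n A b := by
  rw [zQ_of_notMem ha, zQ_of_notMem hb, zQ_of_notMem (by simp [hab.symm, hb]),
    zQ_of_notMem (by simp [hab, ha]), ← map_mul, ← map_mul]
  exact RingQuot.mkAlgHom_rel K (QnRel.mul A a b ha hb hab)

theorem sum_powerset_zQ_insert_comm {B : Finset (Fin n)} {a b : Fin n} (ha : a ∉ B) (hb : b ∉ B)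
    (hab : a ≠ b) :
    ∑ E ∈ (insert b B).powerset, (-1 : Qn K n) ^ #E * zQ K n E a
      = ∑ E ∈ (insert a B).powerset, (-1 : Qn K n) ^ #E * zQ K n E b := by
  rw [sum_powerset_insert_neg_one_pow_mul hb, sum_powerset_insert_neg_one_pow_mul ha]
  refine sum_congr rfl fun E hE => ?_
  have hEB := mem_powerset.mp hE
  congr 1
  rw [sub_eq_sub_iff_add_eq_add, add_comm, zQ_add_rel (fun h => ha (hEB h))
    (fun h => hb (hEB h)) hab, add_comm]

theorem uQ_eq_neg_one_pow_mul_sum {A : Finset (Fin n)} {a : Fin n} (ha : a ∈ A) :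
    uQ K n A = (-1) ^ #A * ∑ E ∈ (A.erase a).powerset, (-1 : Qn K n) ^ #E * zQ K n E a := by
  have hne : A.Nonempty := ⟨a, ha⟩
  have at_min : uQ K n A = (-1) ^ #A * ∑ E ∈ (A.erase (A.min' hne)).powerset,
      (-1 : Qn K n) ^ #E * zQ K n E (A.min' hne) := by
    rw [uQ, dif_pos hne, mul_sum]
    refine sum_congr rfl fun E hE => ?_
    rw [← mul_assoc]
    exact congrArg (· * _) (neg_one_pow_sub_of_le
      (card_le_card ((mem_powerset.mp hE).trans (erase_subset _ A))))
  rw [at_min]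
  set m := A.min' hne
  rcases eq_or_ne a m with rfl | ham
  · rfl
  set B := (A.erase m).erase a
  have haB : a ∉ B := fun h => (mem_erase.mp h).1 rfl
  have hmB : m ∉ B := fun h => (mem_erase.mp (mem_of_mem_erase h)).1 rfl
  have hAm : A.erase m = insert a B := (insert_erase (mem_erase.mpr ⟨ham, ha⟩)).symm
  have hAa : A.erase a = insert m B := by
    rw [show B = (A.erase a).erase m from erase_right_comm,
      insert_erase (mem_erase.mpr ⟨ham.symm, min'_mem A hne⟩)]
  rw [hAa, hAm, sum_powerset_zQ_insert_comm haB hmB ham]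

theorem uQ_pair_s13 {a b : Fin n} (hab : a ≠ b) : uQ K n {a, b} = zQ K n ∅ a - zQ K n {b} a := by
  rw [uQ_eq_neg_one_pow_mul_sum (mem_insert_self a {b}), erase_insert (by simpa using hab),
    card_pair hab, ← insert_empty, sum_powerset_insert_neg_one_pow_mul (notMem_empty b),
    neg_one_sq (R := Qn K n)]
  simp

end Qn

section Qc

-- Generic lemmas are applied to `Qc` with an explicit `(R := Qc K n F)`: the instances that
-- `Qc` inherits from `RingQuot` agree with the generic ones only up to default transparency.
variable (K : Type*) [Field K] (n : ℕ) (F : Set (Finset (Fin n)))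

noncomputable def zc (A : Finset (Fin n)) (a : Fin n) : Qc K n F :=
  RingQuot.mkAlgHom K (QcRel K n F) (zQ K n A a)

variable {K n F}

theorem zc_mul_rel {A : Finset (Fin n)} {a b : Fin n} (ha : a ∉ A) (hb : b ∉ A) (hab : a ≠ b) :
    zc K n F (insert a A) b * zc K n F A a = zc K n F (insert b A) a * zc K n F A b := by
  simp only [zc, ← map_mul, zQ_mul_rel ha hb hab]

theorem uc_eq_neg_one_pow_mul_sum {A : Finset (Fin n)} {a : Fin n} (ha : a ∈ A) :
    uc K n F A = (-1) ^ #A * ∑ E ∈ (A.erase a).powerset, (-1 : Qc K n F) ^ #E * zc K n F E a := by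
  simp only [uc, uQ_eq_neg_one_pow_mul_sum ha, map_mul, map_sum, map_pow, map_neg, map_one, zc]

theorem uc_pair {a b : Fin n} (hab : a ≠ b) : uc K n F {a, b} = zc K n F ∅ a - zc K n F {b} a := by
  simp only [uc, uQ_pair_s13 (K := K) hab, map_sub, zc]

theorem uc_eq_zero_of_two_lt_card (hF : ∀ A ∈ F, #A ≤ 2) {A : Finset (Fin n)} (hA : 2 < #A) :
    uc K n F A = 0 := by
  have hAF : A ∉ F := fun h => (hF A h).not_gt hA
  simpa [uc] using RingQuot.mkAlgHom_rel K (QcRel.rel A (card_pos.mp (by omega)) hAF)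

theorem zc_insert_eq_sub_uc (hF : ∀ A ∈ F, #A ≤ 2) {D : Finset (Fin n)} {m x : Fin n}
    (hmD : m ∉ D) (hxD : x ∉ D) (hmx : m ≠ x) :
    zc K n F (insert x D) m = zc K n F D m - uc K n F {m, x} := by
  have hvanish : ∀ E ⊆ (univ.erase m).erase x, E.Nonempty →
      ∑ E' ∈ E.powerset, (-1 : Qc K n F) ^ #E' * (zc K n F E' m - zc K n F (insert x E') m)
        = 0 := by
    intro E hE hne
    have hmE : m ∉ E := fun h => by simpa using mem_of_mem_erase (hE h)
    have hxE : x ∉ E := fun h => by simpa using hE h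
    have hcard : 2 < #(insert m (insert x E)) := by
      rw [card_insert_of_notMem (by simp [hmx, hmE]), card_insert_of_notMem hxE]
      have := hne.card_pos
      omega
    have h := uc_eq_neg_one_pow_mul_sum (K := K) (F := F) (mem_insert_self m (insert x E))
    rw [uc_eq_zero_of_two_lt_card hF hcard, erase_insert (by simp [hmx, hmE])] at h
    rw [← sum_powerset_insert_neg_one_pow_mul (R := Qc K n F) hxE]
    exact (neg_one_pow_mul_eq_zero_iff (R := Qc K n F)).mp h.symm
  have hD : D ⊆ (univ.erase m).erase x := fun y hy =>
    mem_erase.mpr ⟨fun h => hxD (h ▸ hy), mem_erase.mpr ⟨fun h => hmD (h ▸ hy), mem_univ y⟩⟩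
  have hconst := eq_empty_of_sum_powerset_neg_one_pow_mul_eq_zero (R := Qc K n F) hvanish D hD
  rw [uc_pair hmx, ← insert_empty, ← hconst]
  abel

theorem zc_eq_sub_sum_uc (hF : ∀ A ∈ F, #A ≤ 2) {D : Finset (Fin n)} {m : Fin n} (hmD : m ∉ D) :
    zc K n F D m = zc K n F ∅ m - ∑ x ∈ D, uc K n F {m, x} := by
  induction D using Finset.induction_on with
  | empty => rw [sum_empty, sub_zero (G := Qc K n F)]
  | insert x D hxD ih =>
    have hmD' : m ∉ D := fun h => hmD (mem_insert_of_mem h)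
    have hmx : m ≠ x := fun h => hmD (h ▸ mem_insert_self x D)
    rw [zc_insert_eq_sub_uc hF hmD' hxD hmx, ih hmD', sum_insert hxD]
    abel

theorem zc_sub_uc_mul_zc (hF : ∀ A ∈ F, #A ≤ 2) {D : Finset (Fin n)} {a b : Fin n} (ha : a ∉ D)
    (hb : b ∉ D) (hab : a ≠ b) :
    (zc K n F D b - uc K n F {a, b}) * zc K n F D a
      = (zc K n F D a - uc K n F {a, b}) * zc K n F D b := by
  have h := zc_mul_rel (K := K) (F := F) ha hb hab
  rwa [zc_insert_eq_sub_uc hF hb ha hab.symm, zc_insert_eq_sub_uc hF ha hb hab, pair_comm b a] at h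

end Qc

theorem commutator_eq_of_mul_relations {R : Type*} [Ring R] {ai aj e eik eil ejk ejl : R}
    (h0 : (aj - e) * ai = (ai - e) * aj)
    (hk : (aj - ejk - e) * (ai - eik) = (ai - eik - e) * (aj - ejk))
    (hl : (aj - ejl - e) * (ai - eil) = (ai - eil - e) * (aj - ejl))
    (hkl : (aj - (ejk + ejl) - e) * (ai - (eik + eil))
      = (ai - (eik + eil) - e) * (aj - (ejk + ejl))) :
    eik * ejl - ejl * eik = ejk * eil - eil * ejk := by
  rw [← sub_eq_zero] at h0 hk hl hkl ⊢
  have key : eik * ejl - ejl * eik - (ejk * eil - eil * ejk)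
      = ((aj - ejk - e) * (ai - eik) - (ai - eik - e) * (aj - ejk))
        + ((aj - ejl - e) * (ai - eil) - (ai - eil - e) * (aj - ejl))
        - ((aj - e) * ai - (ai - e) * aj)
        - ((aj - (ejk + ejl) - e) * (ai - (eik + eil))
          - (ai - (eik + eil) - e) * (aj - (ejk + ejl))) := by
    noncomm_ring
  rw [key, h0, hk, hl, hkl]
  abel

theorem graph_commutator_symmetry_general (K : Type*) [Field K] (n : ℕ)
    (F : Set (Finset (Fin n)))
    (hFgr : ∀ A ∈ F, A.card ≤ 2)
    (i j k l : Fin n) (hij : i ≠ j) (hik : i ≠ k) (hil : i ≠ l)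
    (hjk : j ≠ k) (hjl : j ≠ l) (hkl : k ≠ l) :
    uc K n F {i, k} * uc K n F {j, l} - uc K n F {j, l} * uc K n F {i, k} =
      uc K n F {j, k} * uc K n F {i, l} - uc K n F {i, l} * uc K n F {j, k} := by
  have rel : ∀ D : Finset (Fin n), i ∉ D → j ∉ D →
      (zc K n F ∅ j - ∑ x ∈ D, uc K n F {j, x} - uc K n F {i, j})
          * (zc K n F ∅ i - ∑ x ∈ D, uc K n F {i, x})
        = (zc K n F ∅ i - ∑ x ∈ D, uc K n F {i, x} - uc K n F {i, j})
          * (zc K n F ∅ j - ∑ x ∈ D, uc K n F {j, x}) := fun D hi hj => by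
    rw [← zc_eq_sub_sum_uc hFgr hi, ← zc_eq_sub_sum_uc hFgr hj]
    exact zc_sub_uc_mul_zc hFgr hi hj hij
  have rel0 := rel ∅ (notMem_empty i) (notMem_empty j)
  have relk := rel {k} (by simpa using hik) (by simpa using hjk)
  have rell := rel {l} (by simpa using hil) (by simpa using hjl)
  have relkl := rel {k, l} (by simp [hik, hil]) (by simp [hjk, hjl])
  simp only [sum_empty, sub_zero (G := Qc K n F), sum_singleton, sum_pair hkl]
    at rel0 relk rell relkl
  exact commutator_eq_of_mul_relations (R := Qc K n F) rel0 relk rell relkl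

/-- For a graph `F` and pairwise distinct `i, j, k, l`,
`[u(ik), u(jl)] = [u(jk), u(il)]` in `Q(F)`. -/
theorem graph_commutator_symmetry (K : Type*) [Field K] (n : ℕ)
    (F : Set (Finset (Fin n)))
    (hFne : ∀ A ∈ F, A.Nonempty)
    (hFsing : ∀ i : Fin n, ({i} : Finset (Fin n)) ∈ F)
    (hFdown : ∀ A ∈ F, ∀ B ⊆ A, B.Nonempty → B ∈ F)
    (hFgr : ∀ A ∈ F, A.card ≤ 2)
    (i j k l : Fin n) (hij : i ≠ j) (hik : i ≠ k) (hil : i ≠ l)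
    (hjk : j ≠ k) (hjl : j ≠ l) (hkl : k ≠ l) :
    uc K n F {i, k} * uc K n F {j, l} - uc K n F {j, l} * uc K n F {i, k} =
      uc K n F {j, k} * uc K n F {i, l} - uc K n F {i, l} * uc K n F {j, k} :=
  graph_commutator_symmetry_general K n F hFgr i j k l hij hik hil hjk hjl hkl
end
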